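/- Let ψ̂_f := 1_{[−π,π]} be the indicator of [−π,π] (the Fourier transform of the Shannon father wavelet sinc(πt)) and for c > 0 set I(c) := ∫_{−cπ}^{cπ} ( Σ_{n∈ℤ} 1_{[−π,π]}(η + 2ncπ) )² dη. Then I(c) = 2π for c ≥ 1, and for 0 < c < 1, writing n* := ⌊(1−c)/(2c)⌋ and η* := π(1 − 2c(1 + n*)), one has I(c) = 2|η*| (2n* + 2 + sign(η*))² + 2(cπ − |η*|)(2n* + 2)². -/

import Mathlib

open MeasureTheory

/-- The indicator of `[−π,π]`, i.e. the Fourier transform of the Shannon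
father wavelet `sinc(πt)`. -/
noncomputable def shannonHat (η : ℝ) : ℝ :=
  if η ∈ Set.Icc (-Real.pi) Real.pi then 1 else 0

/-- `I(c) = ∫_{−cπ}^{cπ} (Σ_{n∈ℤ} 1_{[−π,π]}(η+2ncπ))² dη`. -/
noncomputable def shannonI (c : ℝ) : ℝ :=
  ∫ η in (-(c * Real.pi))..(c * Real.pi),
    (∑' n : ℤ, shannonHat (η + 2 * (n : ℝ) * c * Real.pi)) ^ 2

/-! The periodized sum `∑ₙ 1_{[−π,π]}(η + 2ncπ)` counts the integers `n` with
`|η + 2ncπ| ≤ π`, namely `⌊(π−η)/2cπ⌋ + ⌊(π+η)/2cπ⌋ + 1` of them. For `|η| < cπ` the two floors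
are `n*` or `n* + 1` according as `η ≤ η*` resp. `−η ≤ η*`, so the integrand is
`(2n* + 2 + sign η*)²` on `|η| < |η*|` and `(2n* + 2)²` on `|η*| < |η| < cπ`. This gives the
formula for every `c > 0`; for `c ≥ 1` one has `n* ∈ {0, −1}` and it collapses to `2π`. -/

open Set Filter Real
open scoped Interval

theorem integral_neg_self_eq_of_piecewise_abs {f : ℝ → ℝ} {h R A B : ℝ} (h0 : 0 ≤ h)
    (hR : h ≤ R) (hin : ∀ η, |η| < h → f η = A) (hout : ∀ η, h < |η| → |η| < R → f η = B) :
    ∫ η in -R..R, f η = 2 * h * A + 2 * (R - h) * B := by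
  set g : ℝ → ℝ := fun η => B + (Ioo (-h) h).indicator (fun _ => A - B) η
  have hfg : ∀ᵐ η, η ∈ Ι (-R) R → f η = g η := by
    filter_upwards [(Set.toFinite {h, -h, R}).countable.ae_notMem volume] with η hη hηR
    simp only [mem_insert_iff, mem_singleton_iff, not_or] at hη
    rw [uIoc_of_le (by linarith), mem_Ioc] at hηR
    rcases lt_or_ge |η| h with hlt | hge
    · have : η ∈ Ioo (-h) h := abs_lt.1 hlt
      simp [g, indicator_of_mem this, hin η hlt]
    · have hgt : h < |η| := hge.lt_of_ne' (by cases abs_choice η <;> grind)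
      have : η ∉ Ioo (-h) h := fun hη' => hgt.not_gt (abs_lt.2 hη')
      simp [g, indicator_of_notMem this, hout η hgt (abs_lt.2 ⟨hηR.1, hηR.2.lt_of_ne hη.2.2⟩)]
  have hind : IntervalIntegrable ((Ioo (-h) h).indicator fun _ => A - B) volume (-R) R :=
    (intervalIntegrable_const (c := A - B)).mono_fun
      (aestronglyMeasurable_const.indicator measurableSet_Ioo)
      (Eventually.of_forall fun η => norm_indicator_le_norm_self _ η)
  rw [intervalIntegral.integral_congr_ae hfg,
    intervalIntegral.integral_add intervalIntegrable_const hind, intervalIntegral.integral_const,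
    intervalIntegral.integral_of_le (by linarith), integral_indicator_const _ measurableSet_Ioo,
    measureReal_restrict_apply measurableSet_Ioo,
    inter_eq_left.2 (Ioo_subset_Ioc_self.trans (Ioc_subset_Ioc (by linarith) hR))]
  simp [Real.volume_real_Ioo_of_le (by linarith : -h ≤ h)]
  ring

theorem tsum_indicator_Icc_add_int_mul {a b L : ℝ} (hab : a ≤ b) (hL : 0 < L) (x : ℝ) :
    ∑' n : ℤ, (Icc a b).indicator (1 : ℝ → ℝ) (x + n * L) =
      ⌊(b - x) / L⌋ - ⌈(a - x) / L⌉ + 1 := by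
  set s := Finset.Icc ⌈(a - x) / L⌉ ⌊(b - x) / L⌋
  have hmem (n : ℤ) : x + n * L ∈ Icc a b ↔ n ∈ s := by
    rw [Finset.mem_Icc, Int.ceil_le, Int.le_floor, div_le_iff₀ hL, le_div_iff₀ hL, mem_Icc]
    constructor <;> rintro ⟨h₁, h₂⟩ <;> constructor <;> linarith
  have hcard_nonneg : ⌈(a - x) / L⌉ ≤ ⌊(b - x) / L⌋ + 1 := by
    have : (a - x) / L ≤ (b - x) / L := by gcongr
    exact Int.ceil_le.2 (by push_cast; linarith [Int.lt_floor_add_one ((b - x) / L)])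
  calc ∑' n : ℤ, (Icc a b).indicator (1 : ℝ → ℝ) (x + n * L)
      = ∑ n ∈ s, (1 : ℝ) := by
        rw [tsum_eq_sum (s := s) fun n hn => indicator_of_notMem (by rwa [hmem]) _]
        exact Finset.sum_congr rfl fun n hn => indicator_of_mem ((hmem n).2 hn) _
    _ = ⌊(b - x) / L⌋ - ⌈(a - x) / L⌉ + 1 := by
        rw [Finset.sum_const, Int.card_Icc, nsmul_one, ← Int.cast_natCast,
          Int.toNat_of_nonneg (by omega)]
        push_cast
        ring

theorem shannonHat_eq_indicator : shannonHat = (Icc (-π) π).indicator 1 := by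
  ext η
  simp [shannonHat, indicator]

theorem tsum_shannonHat_eq {c : ℝ} (hc : 0 < c) (η : ℝ) :
    ∑' n : ℤ, shannonHat (η + 2 * n * c * π) =
      ⌊(π - η) / (2 * c * π)⌋ + ⌊(π + η) / (2 * c * π)⌋ + 1 := by
  have hsum :=
    tsum_indicator_Icc_add_int_mul (neg_le_self pi_pos.le) (by positivity : 0 < 2 * c * π) η
  rw [show (-π - η) / (2 * c * π) = -((π + η) / (2 * c * π)) by ring, Int.ceil_neg] at hsum
  simp only [shannonHat_eq_indicator, mul_comm (2 : ℝ), mul_assoc] at hsum ⊢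
  push_cast at hsum
  linarith

/-- The paper's `n*`. -/
noncomputable def shannonNStar (c : ℝ) : ℤ := ⌊(1 - c) / (2 * c)⌋

/-- The paper's `η*`. -/
noncomputable def shannonEtaStar (c : ℝ) : ℝ := π * (1 - 2 * c * (1 + (shannonNStar c : ℝ)))

theorem shannonNStar_bounds {c : ℝ} (hc : 0 < c) :
    2 * c * shannonNStar c ≤ 1 - c ∧ 1 - c < 2 * c * (shannonNStar c + 1) := by
  have h2c : 0 < 2 * c := by positivity
  constructor
  · have := Int.floor_le ((1 - c) / (2 * c))
    rw [le_div_iff₀ h2c] at this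
    rw [shannonNStar]
    linarith
  · have := Int.lt_floor_add_one ((1 - c) / (2 * c))
    rw [div_lt_iff₀ h2c] at this
    rw [shannonNStar]
    linarith

theorem shannonNStar_of_one_lt {c : ℝ} (hc : 1 < c) : shannonNStar c = -1 := by
  have h2c : 0 < 2 * c := by positivity
  rw [shannonNStar, Int.floor_eq_iff, le_div_iff₀ h2c, div_lt_iff₀ h2c]
  push_cast
  constructor <;> linarith

theorem abs_shannonEtaStar_le {c : ℝ} (hc : 0 < c) : |shannonEtaStar c| ≤ c * π := by
  obtain ⟨h₁, h₂⟩ := shannonNStar_bounds hc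
  rw [abs_le, shannonEtaStar]
  constructor <;> nlinarith [pi_pos]

theorem floor_pi_sub_div_eq {c η : ℝ} (hc : 0 < c) (hη : |η| < c * π) :
    ⌊(π - η) / (2 * c * π)⌋ = shannonNStar c + if η ≤ shannonEtaStar c then 1 else 0 := by
  obtain ⟨h₁, h₂⟩ := shannonNStar_bounds hc
  obtain ⟨hη₁, hη₂⟩ := abs_lt.1 hη
  have hL : 0 < 2 * c * π := by positivity
  have := pi_pos
  rw [Int.floor_eq_iff, le_div_iff₀ hL, div_lt_iff₀ hL, shannonEtaStar]
  split_ifs with he <;> push_cast <;> constructor <;> nlinarith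

theorem tsum_shannonHat_eq_ite {c η : ℝ} (hc : 0 < c) (hη : |η| < c * π) :
    ∑' n : ℤ, shannonHat (η + 2 * n * c * π) =
      2 * shannonNStar c + 1 + (if η ≤ shannonEtaStar c then 1 else 0) +
        (if -η ≤ shannonEtaStar c then 1 else 0) := by
  rw [tsum_shannonHat_eq hc, floor_pi_sub_div_eq hc hη, ← sub_neg_eq_add π η,
    floor_pi_sub_div_eq hc (by rwa [abs_neg])]
  push_cast
  ring

theorem tsum_shannonHat_of_abs_lt {c η : ℝ} (hc : 0 < c) (hη : |η| < |shannonEtaStar c|) :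
    ∑' n : ℤ, shannonHat (η + 2 * n * c * π) =
      2 * shannonNStar c + 2 + Real.sign (shannonEtaStar c) := by
  rw [tsum_shannonHat_eq_ite hc (hη.trans_le (abs_shannonEtaStar_le hc))]
  obtain ⟨hη₁, hη₂⟩ := abs_lt.1 hη
  rcases lt_trichotomy (shannonEtaStar c) 0 with he | he | he
  · rw [abs_of_neg he] at hη₁ hη₂
    rw [if_neg (by linarith), if_neg (by linarith), Real.sign_of_neg he]
    ring
  · exact absurd hη (by simp [he])
  · rw [abs_of_pos he] at hη₁ hη₂
    rw [if_pos (by linarith), if_pos (by linarith), Real.sign_of_pos he]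
    ring

theorem tsum_shannonHat_of_lt_abs {c η : ℝ} (hc : 0 < c) (hη₁ : |shannonEtaStar c| < |η|)
    (hη₂ : |η| < c * π) :
    ∑' n : ℤ, shannonHat (η + 2 * n * c * π) = 2 * shannonNStar c + 2 := by
  rw [tsum_shannonHat_eq_ite hc hη₂]
  have he := abs_le.1 (le_refl |shannonEtaStar c|)
  rcases le_or_gt 0 η with h0 | h0
  · rw [abs_of_nonneg h0] at hη₁
    rw [if_neg (by linarith), if_pos (by linarith)]
    ring
  · rw [abs_of_neg h0] at hη₁
    rw [if_pos (by linarith), if_neg (by linarith)]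
    ring

theorem shannonI_eq {c : ℝ} (hc : 0 < c) :
    shannonI c =
      2 * |shannonEtaStar c| * (2 * shannonNStar c + 2 + Real.sign (shannonEtaStar c)) ^ 2 +
        2 * (c * π - |shannonEtaStar c|) * (2 * shannonNStar c + 2) ^ 2 :=
  integral_neg_self_eq_of_piecewise_abs (abs_nonneg _) (abs_shannonEtaStar_le hc)
    (fun η hη => by rw [tsum_shannonHat_of_abs_lt hc hη])
    (fun η hη₁ hη₂ => by rw [tsum_shannonHat_of_lt_abs hc hη₁ hη₂])

/-- **Example 6.1** (Shannon father wavelet): `I(c) = 2π` for `c ≥ 1`, while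
for `0 < c < 1`, with `n* = ⌊(1−c)/(2c)⌋` and `η* = π(1 − 2c(1+n*))`,
`I(c) = 2|η*|(2n*+2+sign(η*))² + 2(cπ−|η*|)(2n*+2)²`. -/
theorem shannonI_eval :
    (∀ c : ℝ, 1 ≤ c → shannonI c = 2 * Real.pi) ∧
    (∀ c : ℝ, 0 < c → c < 1 →
      shannonI c =
        2 * |Real.pi * (1 - 2 * c * (1 + (⌊(1 - c) / (2 * c)⌋ : ℝ)))| *
          (2 * (⌊(1 - c) / (2 * c)⌋ : ℝ) + 2 +
            Real.sign (Real.pi * (1 - 2 * c * (1 + (⌊(1 - c) / (2 * c)⌋ : ℝ))))) ^ 2 +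
        2 * (c * Real.pi -
            |Real.pi * (1 - 2 * c * (1 + (⌊(1 - c) / (2 * c)⌋ : ℝ)))|) *
          (2 * (⌊(1 - c) / (2 * c)⌋ : ℝ) + 2) ^ 2) := by
  refine ⟨fun c hc => ?_, fun c hc _ => shannonI_eq hc⟩
  rw [shannonI_eq (by positivity), shannonEtaStar]
  rcases hc.lt_or_eq with hc | rfl
  · rw [shannonNStar_of_one_lt hc]
    simp [abs_of_pos pi_pos, Real.sign_of_pos pi_pos]
  · have : shannonNStar 1 = 0 := by norm_num [shannonNStar]
    norm_num [this, Real.sign_of_neg, pi_pos, abs_of_pos]
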